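/- arXiv:1409.4597 — 4 statements merged into one kernel-verified Lean document; each statement's English description precedes it below -/
import Mathlib

section
/- Let r > max(μ,0), M > 1, I > 0, let β₁ > 1 be the positive root of (1/2)σ²β(β-1) + μβ - r = 0, and set x^F = β₁(r-μ)I/(β₁-1). Define for x ∈ [0, x^F]: F(x) = (x/x^F)^{β₁}(x^F/(r-μ) - I) and L(x) = Mx/(r-μ) - I + (x/x^F)^{β₁}·x^F(1-M)/(r-μ). Then there exists a unique x^P ∈ (0, x^F) such that L(x) < F(x) for x ∈ [0, x^P), L(x^P) = F(x^P), and L(x) > F(x) for x ∈ (x^P, x^F). -/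
/-! On `[0, xF]` the difference `L - F` is `M x/(r - μ) - I - A (x/xF)^β₁` with
`A = M xF/(r - μ) - I > 0`, a strictly concave function. It equals `-I < 0` at `0` and vanishes
at `xF` with slope `(1 - M)(β₁ - 1)/(r - μ) < 0`, so it is positive just left of `xF`. The
intermediate value theorem gives a zero in between, and strict concavity makes it the only
sign change: a strictly concave function is positive strictly between two zeros and negative
to the left of both. -/

open Set

lemma strictConcaveOn_affine_sub_mul_rpow {m c k β : ℝ} (hk : 0 < k) (hβ : 1 < β) :
    StrictConcaveOn ℝ (Ici 0) fun x => m * x - c - k * x ^ β := by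
  refine ⟨convex_Ici 0, fun x hx y hy hxy a b ha hb hab => ?_⟩
  have := mul_lt_mul_of_pos_left ((strictConvexOn_rpow hβ).2 hx hy hxy ha hb hab) hk
  simp only [smul_eq_mul] at this ⊢
  linear_combination this - c * hab

lemma strictConcaveOn_affine_sub_mul_div_rpow {m c A d β : ℝ} (hA : 0 < A) (hd : 0 < d)
    (hβ : 1 < β) : StrictConcaveOn ℝ (Ici 0) fun x => m * x - c - A * (x / d) ^ β := by
  refine (strictConcaveOn_affine_sub_mul_rpow (m := m) (c := c)
    (div_pos hA (by positivity : 0 < d ^ β)) hβ).congr ?_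
  intro x hx
  simp only [Real.div_rpow hx hd.le, mul_div_assoc']
  ring

lemma hasDerivAt_affine_sub_mul_div_rpow (m c A β : ℝ) {d : ℝ} (hd : d ≠ 0) :
    HasDerivAt (fun x => m * x - c - A * (x / d) ^ β) (m - A * β / d) d := by
  have hpow := ((hasDerivAt_id d).div_const d).rpow_const (p := β) (by simp [hd])
  simp only [id, div_self hd, Real.one_rpow, mul_one] at hpow
  refine ((((hasDerivAt_id' d).const_mul m).sub_const c).sub (hpow.const_mul A)).congr_deriv ?_
  ring

lemma exists_mem_Ioo_lt_of_hasDerivWithinAt_neg {f : ℝ → ℝ} {f' a b : ℝ} (hab : a < b)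
    (hf : HasDerivWithinAt f f' (Iio b) b) (hf' : f' < 0) : ∃ c ∈ Ioo a b, f b < f c := by
  obtain ⟨c, hslope, hc⟩ :=
    ((hf.limsup_slope_le' (lt_irrefl b) hf').and (Ioo_mem_nhdsLT hab)).exists
  rw [slope_comm, slope_neg_iff_of_le hc.2.le] at hslope
  exact ⟨c, hc, hslope⟩

section StrictConcave

variable {s : Set ℝ} {g : ℝ → ℝ} {x y z : ℝ}

lemma StrictConcaveOn.neg_of_lt_of_eq_zero (hg : StrictConcaveOn ℝ s g) (hx : x ∈ s)
    (hz : z ∈ s) (hxy : x < y) (hyz : y < z) (hy0 : g y = 0) (hz0 : g z = 0) : g x < 0 := by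
  have := hg.slope_anti_adjacent hx hz hxy hyz
  rw [hy0, hz0, sub_self, zero_div, zero_sub, neg_div, neg_pos] at this
  exact neg_of_div_neg_left this (sub_pos.2 hxy).le

lemma StrictConcaveOn.pos_of_lt_of_eq_zero (hg : StrictConcaveOn ℝ s g) (hx : x ∈ s)
    (hz : z ∈ s) (hxy : x < y) (hyz : y < z) (hx0 : g x = 0) (hz0 : g z = 0) : 0 < g y := by
  simpa [hx0, hz0] using
    hg.lt_on_openSegment hx hz (hxy.trans hyz).ne
      (openSegment_eq_Ioo (hxy.trans hyz) ▸ ⟨hxy, hyz⟩)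

end StrictConcave

theorem StrictConcaveOn.existsUnique_sign_change {g : ℝ → ℝ} {a b c : ℝ}
    (hg : StrictConcaveOn ℝ (Icc a b) g) (hcont : ContinuousOn g (Icc a b)) (ha : g a < 0)
    (hb : g b = 0) (hc : c ∈ Ioo a b) (hgc : 0 < g c) :
    ∃! p, p ∈ Ioo a b ∧ (∀ x ∈ Ico a p, g x < 0) ∧ g p = 0 ∧
      ∀ x ∈ Ioo p b, 0 < g x := by
  obtain ⟨p, hp, hp0⟩ :=
    intermediate_value_Ioo hc.1.le (hcont.mono (Icc_subset_Icc_right hc.2.le)) ⟨ha, hgc⟩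
  have hpb : p < b := hp.2.trans hc.2
  have hb_mem : b ∈ Icc a b := right_mem_Icc.2 (hp.1.trans hpb).le
  have hneg : ∀ x ∈ Ico a p, g x < 0 := fun x hx =>
    hg.neg_of_lt_of_eq_zero ⟨hx.1, (hx.2.trans hpb).le⟩ hb_mem hx.2 hpb hp0 hb
  have hpos : ∀ x ∈ Ioo p b, 0 < g x := fun x hx =>
    hg.pos_of_lt_of_eq_zero ⟨hp.1.le, hpb.le⟩ hb_mem hx.1 hx.2 hp0 hb
  refine ⟨p, ⟨⟨hp.1, hpb⟩, hneg, hp0, hpos⟩, ?_⟩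
  rintro q ⟨hq, hq_neg, hq0, -⟩
  rcases lt_trichotomy q p with hqp | hqp | hqp
  · exact absurd hq0 (hneg q ⟨hq.1.le, hqp⟩).ne
  · exact hqp
  · exact absurd hp0 (hq_neg p ⟨hp.1.le, hqp⟩).ne

noncomputable def leaderFollowerGap (r μ I M β xF x : ℝ) : ℝ :=
  M / (r - μ) * x - I - (M * xF / (r - μ) - I) * (x / xF) ^ β

section LeaderFollowerGap

variable {r μ I M β xF : ℝ}

lemma leaderFollowerGap_zero (hβ : β ≠ 0) : leaderFollowerGap r μ I M β xF 0 = -I := by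
  simp [leaderFollowerGap, Real.zero_rpow hβ]

lemma leaderFollowerGap_self (hxF : xF ≠ 0) : leaderFollowerGap r μ I M β xF xF = 0 := by
  rw [leaderFollowerGap, div_self hxF, Real.one_rpow]
  ring

lemma followerThreshold_pos (hrμ : 0 < r - μ) (hI : 0 < I) (hβ : 1 < β)
    (hxF : xF = β / (β - 1) * ((r - μ) * I)) : 0 < xF := by
  have : 0 < β - 1 := sub_pos.2 hβ
  rw [hxF]
  positivity

lemma lt_mul_followerThreshold_div (hrμ : 0 < r - μ) (hM : 1 < M) (hI : 0 < I) (hβ : 1 < β)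
    (hxF : xF = β / (β - 1) * ((r - μ) * I)) : I < M * xF / (r - μ) := by
  have hβ' : 1 < β / (β - 1) := (one_lt_div (sub_pos.2 hβ)).2 (by linarith)
  have hxF_div : xF / (r - μ) = β / (β - 1) * I := by rw [hxF]; field_simp
  rw [mul_div_assoc, hxF_div, ← mul_assoc]
  exact lt_mul_left hI (one_lt_mul_of_lt_of_le hM hβ'.le)

lemma strictConcaveOn_leaderFollowerGap (hrμ : 0 < r - μ) (hM : 1 < M) (hI : 0 < I)
    (hβ : 1 < β) (hxF : xF = β / (β - 1) * ((r - μ) * I)) :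
    StrictConcaveOn ℝ (Ici 0) (leaderFollowerGap r μ I M β xF) :=
  strictConcaveOn_affine_sub_mul_div_rpow
    (sub_pos.2 (lt_mul_followerThreshold_div hrμ hM hI hβ hxF))
    (followerThreshold_pos hrμ hI hβ hxF) hβ

lemma continuous_leaderFollowerGap (hβ : 0 ≤ β) :
    Continuous (leaderFollowerGap r μ I M β xF) := by
  unfold leaderFollowerGap
  fun_prop (disch := assumption)

lemma exists_leaderFollowerGap_pos (hrμ : 0 < r - μ) (hM : 1 < M) (hI : 0 < I) (hβ : 1 < β)
    (hxF : xF = β / (β - 1) * ((r - μ) * I)) :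
    ∃ c ∈ Ioo 0 xF, 0 < leaderFollowerGap r μ I M β xF c := by
  have hxF_pos := followerThreshold_pos hrμ hI hβ hxF
  have hslope :
      M / (r - μ) - (M * xF / (r - μ) - I) * β / xF = (1 - M) * (β - 1) / (r - μ) := by
    have : β - 1 ≠ 0 := (sub_pos.2 hβ).ne'
    rw [hxF]
    field_simp
    ring
  have hneg : M / (r - μ) - (M * xF / (r - μ) - I) * β / xF < 0 := by
    rw [hslope]
    exact div_neg_of_neg_of_pos (mul_neg_of_neg_of_pos (by linarith) (by linarith)) hrμ
  obtain ⟨c, hc, hlt⟩ := exists_mem_Ioo_lt_of_hasDerivWithinAt_neg hxF_pos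
    (hasDerivAt_affine_sub_mul_div_rpow _ I _ β hxF_pos.ne').hasDerivWithinAt hneg
  exact ⟨c, hc, (leaderFollowerGap_self hxF_pos.ne').symm.trans_lt hlt⟩

end LeaderFollowerGap

theorem exists_unique_preemption_threshold_general
    (r μ I M β₁ : ℝ) (hr : r > max μ 0) (hM : M > 1) (hI : I > 0)
    (hβ₁ : β₁ > 1)
    (xF : ℝ) (hxF : xF = β₁ / (β₁ - 1) * ((r - μ) * I))
    (F L : ℝ → ℝ)
    (hF : ∀ x ∈ Set.Icc 0 xF, F x = (x / xF) ^ β₁ * (xF / (r - μ) - I))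
    (hL : ∀ x ∈ Set.Icc 0 xF,
      L x = M * x / (r - μ) - I + (x / xF) ^ β₁ * (xF * (1 - M) / (r - μ))) :
    ∃! xP, xP ∈ Set.Ioo 0 xF ∧
      (∀ x ∈ Set.Ico 0 xP, L x < F x) ∧
      L xP = F xP ∧
      (∀ x ∈ Set.Ioo xP xF, L x > F x) := by
  have hrμ : 0 < r - μ := sub_pos.2 (max_lt_iff.1 hr).1
  have hxF_pos := followerThreshold_pos hrμ hI hβ₁ hxF
  have hgap : EqOn (L - F) (leaderFollowerGap r μ I M β₁ xF) (Icc 0 xF) := by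
    intro x hx
    rw [Pi.sub_apply, hL x hx, hF x hx, leaderFollowerGap]
    ring
  obtain ⟨c, hc, hc_pos⟩ := exists_leaderFollowerGap_pos hrμ hM hI hβ₁ hxF
  have hcross := StrictConcaveOn.existsUnique_sign_change (g := L - F)
    (((strictConcaveOn_leaderFollowerGap hrμ hM hI hβ₁ hxF).subset Icc_subset_Ici_self
      (convex_Icc 0 xF)).congr hgap.symm)
    ((continuous_leaderFollowerGap (by linarith)).continuousOn.congr hgap)
    (by rw [hgap (left_mem_Icc.2 hxF_pos.le), leaderFollowerGap_zero (by linarith)]; linarith)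
    ((hgap (right_mem_Icc.2 hxF_pos.le)).trans (leaderFollowerGap_self hxF_pos.ne'))
    hc (by rwa [hgap ⟨hc.1.le, hc.2.le⟩])
  simpa only [Pi.sub_apply, sub_neg, sub_eq_zero, sub_pos, gt_iff_lt] using hcross

/-- In the preemptive market entry model there is a unique preemption threshold
`x^P ∈ (0, x^F)` at which the leader and follower values cross. -/
theorem exists_unique_preemption_threshold
    (r μ σ I M β₁ : ℝ) (hr : r > max μ 0) (hM : M > 1) (hI : I > 0)
    (hβ₁ : β₁ > 1) (hroot : (1/2) * σ^2 * β₁ * (β₁ - 1) + μ * β₁ - r = 0)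
    (xF : ℝ) (hxF : xF = β₁ / (β₁ - 1) * ((r - μ) * I))
    (F L : ℝ → ℝ)
    (hF : ∀ x ∈ Set.Icc 0 xF, F x = (x / xF) ^ β₁ * (xF / (r - μ) - I))
    (hL : ∀ x ∈ Set.Icc 0 xF,
      L x = M * x / (r - μ) - I + (x / xF) ^ β₁ * (xF * (1 - M) / (r - μ))) :
    ∃! xP, xP ∈ Set.Ioo 0 xF ∧
      (∀ x ∈ Set.Ico 0 xP, L x < F x) ∧
      L xP = F xP ∧
      (∀ x ∈ Set.Ioo xP xF, L x > F x) :=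
  exists_unique_preemption_threshold_general r μ I M β₁ hr hM hI hβ₁ xF hxF F L hF hL
end

section
/- With the notation of the preemptive market entry model (F, L, M as functions of the state x on [0,x^F], with M(x) = x/(r-μ) - I, and L, F as above), we have lim_{x↗x^F} (L(x) - F(x))/(L(x) - M(x)) = 1. -/
/-!
Write `p x = (x / x^F) ^ β₁`. Both `L - M` and `L - F` are combinations of `x - x^F p(x)` and
`p(x) - 1`, and dividing these by `x - x^F` leaves `1 - x^F s(x)` and `s(x)`, where `s` is the
difference quotient of `p` at `x^F`. So the ratio is a fixed rational function of `s(x)`, and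
`s(x) → p'(x^F) = β₁ / x^F`; plugging this in and using `x^F = β₁ (r - μ) I / (β₁ - 1)` gives `1`.
-/

open Set Filter Topology

theorem hasDerivAt_div_rpow_self {a : ℝ} (ha : a ≠ 0) (β : ℝ) :
    HasDerivAt (fun x => (x / a) ^ β) (β / a) a := by
  have h := ((hasDerivAt_id a).div_const a).rpow_const (p := β) (Or.inl (by simp [ha]))
  simpa [ha, div_eq_inv_mul, mul_comm] using h

theorem tendsto_combination_div_of_hasDerivAt {p : ℝ → ℝ} {a p' : ℝ} (hp : HasDerivAt p p' a)
    (hpa : p a = 1) (α κ γ : ℝ) (hne : γ * (1 - a * p') ≠ 0) :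
    Tendsto (fun x => (α * (x - a * p x) + κ * (p x - 1)) / (γ * (x - a * p x))) (𝓝[≠] a)
      (𝓝 ((α * (1 - a * p') + κ * p') / (γ * (1 - a * p')))) := by
  have hs := hasDerivAt_iff_tendsto_slope.mp hp
  have hlim : Tendsto (fun s => (α * (1 - a * s) + κ * s) / (γ * (1 - a * s))) (𝓝 p')
      (𝓝 ((α * (1 - a * p') + κ * p') / (γ * (1 - a * p')))) :=
    (Continuous.continuousAt (by fun_prop)).tendsto.div
      ((Continuous.continuousAt (by fun_prop)).tendsto) hne
  refine (hlim.comp hs).congr' ?_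
  filter_upwards [self_mem_nhdsWithin] with x (hx : x ≠ a)
  have hxa : x - a ≠ 0 := sub_ne_zero.mpr hx
  simp only [Function.comp_apply, slope_def_field, hpa]
  field_simp
  ring

theorem tendsto_ratio_one_at_xF_general
    (r μ I M : ℝ) (hr : r > max μ 0) (hM : M > 1) (hI : I > 0)
    (β₁ : ℝ) (hβ₁ : β₁ > 1)
    (xF : ℝ) (hxF : xF = β₁ / (β₁ - 1) * ((r - μ) * I))
    (F L MM : ℝ → ℝ)
    (hF : ∀ x ∈ Set.Icc 0 xF, F x = (x / xF) ^ β₁ * (xF / (r - μ) - I))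
    (hL : ∀ x ∈ Set.Icc 0 xF,
      L x = M * x / (r - μ) - I + (x / xF) ^ β₁ * (xF * (1 - M) / (r - μ)))
    (hMM : ∀ x ∈ Set.Icc 0 xF, MM x = x / (r - μ) - I) :
    Filter.Tendsto (fun x => (L x - F x) / (L x - MM x))
      (nhdsWithin xF (Set.Iio xF)) (nhds 1) := by
  have hc : 0 < r - μ := sub_pos.mpr (max_lt_iff.mp hr).1
  have hβ : 0 < β₁ - 1 := sub_pos.mpr hβ₁
  have hxF0 : 0 < xF := by
    rw [hxF]
    positivity
  have hslope : xF * (β₁ / xF) = β₁ := mul_div_cancel₀ _ hxF0.ne'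
  have hne : (M - 1) / (r - μ) * (1 - xF * (β₁ / xF)) ≠ 0 := by
    rw [hslope]
    exact mul_ne_zero (div_ne_zero (by linarith) hc.ne') (by linarith)
  have hone : (M / (r - μ) * (1 - xF * (β₁ / xF)) + I * (β₁ / xF)) /
      ((M - 1) / (r - μ) * (1 - xF * (β₁ / xF))) = 1 := by
    rw [div_eq_one_iff_eq hne, hxF]
    field_simp [hβ.ne']
    ring
  have hlim := tendsto_combination_div_of_hasDerivAt (hasDerivAt_div_rpow_self hxF0.ne' β₁)
    (by simp [hxF0.ne']) (M / (r - μ)) I ((M - 1) / (r - μ)) hne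
  rw [hone] at hlim
  refine (hlim.mono_left (nhdsLT_le_nhdsNE xF)).congr' ?_
  filter_upwards [Ioo_mem_nhdsLT hxF0] with x hx
  have hx' : x ∈ Icc 0 xF := Ioo_subset_Icc_self hx
  rw [hL x hx', hF x hx', hMM x hx']
  field_simp
  ring

/-- As `x ↗ x^F`, the ratio `(L(x) - F(x)) / (L(x) - M(x))` tends to `1`. -/
theorem tendsto_ratio_one_at_xF
    (r μ σ I M : ℝ) (hr : r > max μ 0) (hM : M > 1) (hI : I > 0)
    (β₁ : ℝ) (hβ₁ : β₁ > 1) (hroot : (1/2) * σ^2 * β₁ * (β₁ - 1) + μ * β₁ - r = 0)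
    (xF : ℝ) (hxF : xF = β₁ / (β₁ - 1) * ((r - μ) * I))
    (F L MM : ℝ → ℝ)
    (hF : ∀ x ∈ Set.Icc 0 xF, F x = (x / xF) ^ β₁ * (xF / (r - μ) - I))
    (hL : ∀ x ∈ Set.Icc 0 xF,
      L x = M * x / (r - μ) - I + (x / xF) ^ β₁ * (xF * (1 - M) / (r - μ)))
    (hMM : ∀ x ∈ Set.Icc 0 xF, MM x = x / (r - μ) - I) :
    Filter.Tendsto (fun x => (L x - F x) / (L x - MM x))
      (nhdsWithin xF (Set.Iio xF)) (nhds 1) :=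
  tendsto_ratio_one_at_xF_general r μ I M hr hM hI β₁ hβ₁ xF hxF F L MM hF hL hMM
end

section
/- Let r, λ > 0, a = 2 + r/λ, b = r/(r+λ), and let T be an exponential random variable with rate λ generating the filtration 𝓕_t = σ(1_{s≤T} : s ≤ t). Define L²_t = e^{-rt} 1_{t<T} + (a - e^{-rt} b) 1_{t≥T}. Then L² is a strict submartingale: for all 0 ≤ s < t, E[L²_t | 𝓕_s] > L²_s almost surely. -/
/-!
The event `{s < T}` is an atom of `𝓕_s` (before the jump the filtration has seen nothing), so on
it `E[L²_t | 𝓕_s]` is the elementary conditional expectation given `s < T`, and memorylessness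
gives `P(t < T | s < T) = e^{-λ(t-s)}`. With `τ = t - s`, the strict inequality on `{s < T}`
reduces to `1 - e^{-(r+λ)τ} ≤ (1 + r/λ)(1 - e^{-λτ})`, i.e. convexity of `k ↦ e^{-kτ}`,
together with `a - e^{-rt} b > 1 + r/λ`; on `{T ≤ s}` it is the decay of `e^{-rt}`.
-/

open MeasureTheory

namespace MeasurableSpace

@[reducible] def collapse {Ω : Type*} (A : Set Ω) : MeasurableSpace Ω where
  MeasurableSet' S := A ⊆ S ∨ Disjoint A S
  measurableSet_empty := Or.inr (Set.disjoint_empty A)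
  measurableSet_compl S := by
    rintro (h | h)
    · exact Or.inr (Set.disjoint_compl_right_iff_subset.2 h)
    · exact Or.inl (Set.subset_compl_iff_disjoint_right.2 h)
  measurableSet_iUnion S := by
    intro h
    by_cases hsub : ∃ i, A ⊆ S i
    · obtain ⟨i, hi⟩ := hsub
      exact Or.inl (hi.trans (Set.subset_iUnion S i))
    · push Not at hsub
      exact Or.inr (Set.disjoint_iUnion_right.2 fun i => (h i).resolve_left (hsub i))

theorem comap_le_collapse {Ω β : Type*} [mβ : MeasurableSpace β] {A : Set Ω} {f : Ω → β} {c : β}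
    (hf : ∀ ω ∈ A, f ω = c) : mβ.comap f ≤ collapse A := by
  rintro _ ⟨S, -, rfl⟩
  by_cases hc : c ∈ S
  · exact Or.inl fun ω hω => by simp [Set.mem_preimage, hf ω hω, hc]
  · exact Or.inr (Set.disjoint_left.2 fun ω hω => by simp [Set.mem_preimage, hf ω hω, hc])

end MeasurableSpace

section Atom

variable {Ω : Type*} {m₀ m : MeasurableSpace Ω} {μ : Measure[m₀] Ω} [IsFiniteMeasure μ]
  {A B : Set Ω}

theorem condExp_indicator_const_of_subset_atom (hm : m ≤ m₀) (hmA : m ≤ .collapse A)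
    (hA : MeasurableSet[m] A) (hB : MeasurableSet[m₀] B) (hBA : B ⊆ A) (c : ℝ) :
    μ[B.indicator fun _ => c | m] =ᵐ[μ] A.indicator fun _ => μ.real B / μ.real A * c := by
  have hA₀ : MeasurableSet[m₀] A := hm A hA
  refine (ae_eq_condExp_of_forall_setIntegral_eq hm ((integrable_const c).indicator hB)
    (fun S _ _ => ((integrable_const (μ := μ) _).indicator hA₀).integrableOn) (fun S hS _ => ?_)
    (stronglyMeasurable_const.indicator hA).aestronglyMeasurable).symm
  rw [integral_indicator_const _ hA₀, integral_indicator_const _ hB,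
    measureReal_restrict_apply hA₀, measureReal_restrict_apply hB, smul_eq_mul, smul_eq_mul]
  rcases hmA S hS with hAS | hAS
  · rw [Set.inter_eq_left.2 hAS, Set.inter_eq_left.2 (hBA.trans hAS), ← mul_assoc,
      mul_div_cancel_of_imp' fun h => measureReal_mono_null (μ := μ) hBA h]
  · rw [hAS.inter_eq, (hAS.mono_left hBA).inter_eq]
    simp

end Atom

open Real

theorem mul_one_sub_exp_neg_le {k l : ℝ} (hk : 0 ≤ k) (hkl : k ≤ l) (x : ℝ) :
    k * (1 - exp (-l * x)) ≤ l * (1 - exp (-k * x)) := by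
  rcases (hk.trans hkl).eq_or_lt with rfl | hl
  · simp [le_antisymm hkl hk]
  have hconv := convexOn_exp.2 (Set.mem_univ (-l * x)) (Set.mem_univ 0)
    (div_nonneg hk hl.le) (sub_nonneg.2 ((div_le_one hl).2 hkl)) (add_sub_cancel _ 1)
  have harg : k / l * (-l * x) = -k * x := by field_simp
  simp only [smul_eq_mul, mul_zero, add_zero, exp_zero, mul_one, harg] at hconv
  have := mul_le_mul_of_nonneg_left hconv hl.le
  rw [mul_add, ← mul_assoc, mul_div_cancel₀ _ hl.ne', mul_sub, mul_div_cancel₀ _ hl.ne'] at this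
  linarith

theorem exp_neg_mul_lt_add_exp_neg_mul_sub {r lam s t C : ℝ} (hr : 0 ≤ r) (hlam : 0 < lam)
    (hs : 0 ≤ s) (hst : s < t) (hC : 1 + r / lam < C) :
    exp (-r * s) < C + exp (-lam * (t - s)) * (exp (-r * t) - C) := by
  have hq : exp (-lam * (t - s)) < 1 := exp_lt_one_iff.2 (by nlinarith)
  have hdecay : exp (-r * t) * exp (-lam * (t - s)) =
      exp (-r * s) * exp (-(r + lam) * (t - s)) := by
    rw [← exp_add, ← exp_add]; ring_nf
  have hrs : exp (-r * s) ≤ 1 := exp_le_one_iff.2 (by nlinarith)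
  have hrls : 0 ≤ 1 - exp (-(r + lam) * (t - s)) :=
    sub_nonneg.2 (exp_le_one_iff.2 (by nlinarith))
  have hslope : 1 - exp (-(r + lam) * (t - s)) ≤ (1 + r / lam) * (1 - exp (-lam * (t - s))) := by
    have := mul_one_sub_exp_neg_le hlam.le (le_add_of_nonneg_left hr) (t - s)
    rw [one_add_div hlam.ne', div_mul_eq_mul_div, le_div_iff₀ hlam]
    linarith
  calc exp (-r * s) = exp (-r * s) * (1 - exp (-(r + lam) * (t - s))) +
        exp (-r * t) * exp (-lam * (t - s)) := by rw [hdecay]; ring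
    _ ≤ (1 + r / lam) * (1 - exp (-lam * (t - s))) + exp (-r * t) * exp (-lam * (t - s)) :=
        add_le_add_left ((mul_le_of_le_one_left hrls hrs).trans hslope) _
    _ < C * (1 - exp (-lam * (t - s))) + exp (-r * t) * exp (-lam * (t - s)) := by
        gcongr
    _ = _ := by ring

theorem measureReal_setOf_lt_eq_exp {Ω : Type*} [MeasurableSpace Ω] {μ : Measure Ω}
    [IsProbabilityMeasure μ] {T : Ω → ℝ} {lam z : ℝ} (hlam : 0 ≤ lam) (hz : 0 ≤ z)
    (hmeas : MeasurableSet {ω | z < T ω})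
    (hTz : μ {ω | T ω ≤ z} = ENNReal.ofReal (1 - exp (-lam * z))) :
    μ.real {ω | z < T ω} = exp (-lam * z) := by
  have hcompl : {ω | z < T ω} = {ω | T ω ≤ z}ᶜ := by ext; simp
  rw [hcompl, probReal_compl_eq_one_sub (by simpa [hcompl] using hmeas.compl), measureReal_def,
    hTz, ENNReal.toReal_ofReal (sub_nonneg.2 (exp_le_one_iff.2 (by nlinarith)))]
  ring

theorem setOf_lt_eq_preimage_zero {Ω : Type*} {T : Ω → ℝ} {u : ℝ → Ω → ℝ}
    (hu_def : ∀ s ω, u s ω = if T ω ≤ s then 1 else 0) (s : ℝ) :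
    {ω | s < T ω} = u s ⁻¹' {0} := by
  ext ω; by_cases h : T ω ≤ s <;> simp [hu_def, h, not_le.1]

section JumpProcess

variable {Ω : Type*} [MeasurableSpace Ω] {T : Ω → ℝ} {u : ℝ → Ω → ℝ}

theorem natural_le_collapse (hu : ∀ s, StronglyMeasurable (u s))
    (hu_def : ∀ s ω, u s ω = if T ω ≤ s then 1 else 0) (s : ℝ) :
    Filtration.natural u hu s ≤ .collapse {ω | s < T ω} :=
  iSup₂_le fun j hj => MeasurableSpace.comap_le_collapse (c := 0) fun ω hω => by
    simp [hu_def, hj.trans_lt hω]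

theorem measurableSet_natural_lt (hu : ∀ s, StronglyMeasurable (u s))
    (hu_def : ∀ s ω, u s ω = if T ω ≤ s then 1 else 0) (s : ℝ) :
    MeasurableSet[Filtration.natural u hu s] {ω | s < T ω} := by
  rw [setOf_lt_eq_preimage_zero hu_def]
  exact (Filtration.stronglyAdapted_natural hu s).measurable (measurableSet_singleton 0)

theorem condExp_ite_lt_natural {μ : Measure Ω} [IsProbabilityMeasure μ]
    (hu : ∀ s, StronglyMeasurable (u s)) (hu_def : ∀ s ω, u s ω = if T ω ≤ s then 1 else 0)
    {lam s t : ℝ} (hlam : 0 ≤ lam) (hs : 0 ≤ s) (hst : s ≤ t)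
    (hTexp : ∀ z : ℝ, 0 ≤ z → μ {ω | T ω ≤ z} = ENNReal.ofReal (1 - exp (-lam * z))) (x y : ℝ) :
    μ[fun ω => if t < T ω then x else y | Filtration.natural u hu s] =ᵐ[μ]
      fun ω => if s < T ω then y + exp (-lam * (t - s)) * (x - y) else y := by
  have hmeas : ∀ z, MeasurableSet {ω | z < T ω} := fun z => by
    rw [setOf_lt_eq_preimage_zero hu_def]; exact (hu z).measurable (measurableSet_singleton 0)
  have hratio : μ.real {ω | t < T ω} / μ.real {ω | s < T ω} = exp (-lam * (t - s)) := by
    rw [measureReal_setOf_lt_eq_exp hlam (hs.trans hst) (hmeas t) (hTexp t (hs.trans hst)),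
      measureReal_setOf_lt_eq_exp hlam hs (hmeas s) (hTexp s hs), ← exp_sub]
    ring_nf
  have hsplit : ∀ (z c d : ℝ), (fun ω => if z < T ω then c else d) =
      (fun _ => d) + {ω | z < T ω}.indicator fun _ => c - d := by
    intro z c d; ext ω; by_cases h : z < T ω <;> simp [h]
  rw [hsplit, hsplit, ← hratio]
  refine (condExp_add (integrable_const y) ((integrable_const _).indicator (hmeas t)) _).trans ?_
  rw [condExp_const (Filtration.le _ s), add_sub_cancel_left]
  exact .add .rfl (condExp_indicator_const_of_subset_atom (Filtration.le _ s)
    (natural_le_collapse hu hu_def s) (measurableSet_natural_lt hu hu_def s) (hmeas t)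
    (fun ω hω => hst.trans_lt hω) _)

end JumpProcess

theorem L2_strict_submartingale_general
    {Ω : Type*} {m : MeasurableSpace Ω} (μ : MeasureTheory.Measure Ω)
    [MeasureTheory.IsProbabilityMeasure μ]
    (r lam : ℝ) (hr : 0 < r) (hlam : 0 < lam)
    (a b : ℝ) (ha : a = 2 + r / lam) (hb : b = r / (r + lam))
    (T : Ω → ℝ)
    (hTexp : ∀ z : ℝ, 0 ≤ z → μ {ω | T ω ≤ z} = ENNReal.ofReal (1 - Real.exp (-lam * z)))
    (u : ℝ → Ω → ℝ) (hu_def : ∀ s ω, u s ω = if T ω ≤ s then 1 else 0)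
    (hu : ∀ s, MeasureTheory.StronglyMeasurable (u s))
    (L2 : ℝ → Ω → ℝ)
    (hL2 : ∀ t ω, L2 t ω =
      if t < T ω then Real.exp (-r * t) else a - Real.exp (-r * t) * b) :
    ∀ s t : ℝ, 0 ≤ s → s < t →
      ∀ᵐ ω ∂μ, L2 s ω < (μ[L2 t | (MeasureTheory.Filtration.natural u hu) s]) ω := by
  intro s t hs hst
  have hb01 : 0 < b ∧ b < 1 := by
    rw [hb]; exact ⟨by positivity, (div_lt_one (by positivity)).2 (by linarith)⟩
  have hC : 1 + r / lam < a - exp (-r * t) * b := by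
    have : exp (-r * t) ≤ 1 := exp_le_one_iff.2 (by nlinarith)
    rw [ha]; nlinarith
  have hdecay : exp (-r * t) < exp (-r * s) := exp_lt_exp.2 (by nlinarith)
  rw [show L2 t = _ from funext (hL2 t)]
  filter_upwards [condExp_ite_lt_natural hu hu_def hlam.le hs hst.le hTexp
    (exp (-r * t)) (a - exp (-r * t) * b)] with ω hω
  rw [hω, hL2]
  by_cases h : s < T ω
  · simp only [h, if_true]
    exact exp_neg_mul_lt_add_exp_neg_mul_sub hr.le hlam hs hst hC
  · simp only [h, if_false]
    nlinarith

/-- In the jump example, firm 2's leader payoff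
`L²_t = e^{-rt} 1_{t<T} + (a - e^{-rt}b) 1_{t≥T}` (with `a = 2 + r/λ`,
`b = r/(r+λ)`, `T` exponential with rate `λ` generating the filtration) is a
strict submartingale. -/
theorem L2_strict_submartingale
    {Ω : Type*} {m : MeasurableSpace Ω} (μ : MeasureTheory.Measure Ω)
    [MeasureTheory.IsProbabilityMeasure μ]
    (r lam : ℝ) (hr : 0 < r) (hlam : 0 < lam)
    (a b : ℝ) (ha : a = 2 + r / lam) (hb : b = r / (r + lam))
    (T : Ω → ℝ) (hT : Measurable T)
    (hTexp : ∀ z : ℝ, 0 ≤ z → μ {ω | T ω ≤ z} = ENNReal.ofReal (1 - Real.exp (-lam * z)))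
    (u : ℝ → Ω → ℝ) (hu_def : ∀ s ω, u s ω = if T ω ≤ s then 1 else 0)
    (hu : ∀ s, MeasureTheory.StronglyMeasurable (u s))
    (L2 : ℝ → Ω → ℝ)
    (hL2 : ∀ t ω, L2 t ω =
      if t < T ω then Real.exp (-r * t) else a - Real.exp (-r * t) * b) :
    ∀ s t : ℝ, 0 ≤ s → s < t →
      ∀ᵐ ω ∂μ, L2 s ω < (μ[L2 t | (MeasureTheory.Filtration.natural u hu) s]) ω :=
  L2_strict_submartingale_general (m := m) μ r lam hr hlam a b ha hb T hTexp u hu_def hu L2 hL2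
end

section
/- Let r, λ > 0, a = 2 + r/λ, b = r/(r+λ), c ∈ [1, 1+b), and T exponential with rate λ. Define L¹_t = a - e^{-rt}b, L²_t = e^{-rt}1_{t<T} + (a - e^{-rt}b)1_{t≥T}, and F_t = e^{-rt}c. Then for any events A₁, A₂ (measurable with respect to 𝓕_T) with P[A₁ ∩ A₂] = 0 and A₂ ⊆ A₁ᶜ up to null sets, E[L¹_T 1_{A₁} + F_T 1_{A₁ᶜ}] + E[L²_T 1_{A₂} + F_T 1_{A₂ᶜ}] ≤ a - (b-c)·λ/(r+λ) < L¹_0 + L²_0 = a - b + 1. -/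
/-!
Since `P[A₁ ∩ A₂] = 0`, almost surely at most one player collects the leader payoff
`L_T = a - e^{-rT} b`, and `F_T ≤ L_T` because `e^{-rT} ≤ 1` and `b + c ≤ a`. Hence the payoff
sum is pointwise at most `L_T + F_T = a + (c - b) e^{-rT}`, whose expectation is
`a + (c - b) λ/(r+λ)` by `E[e^{-rT}] = λ/(r+λ)`. This is below `a + λ/(r+λ) = a - b + 1`
because `c - b < 1`.
-/

open MeasureTheory ProbabilityTheory Real Set

section

variable {Ω : Type*} {m : MeasurableSpace Ω} {μ : Measure Ω}

lemma ae_pos_of_cdf {lam : ℝ} {T : Ω → ℝ}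
    (hTexp : ∀ z : ℝ, 0 ≤ z → μ {ω | T ω ≤ z} = ENNReal.ofReal (1 - exp (-lam * z))) :
    ∀ᵐ ω ∂μ, 0 < T ω := by
  simp [ae_iff, hTexp 0 le_rfl]

lemma map_eq_expMeasure_of_cdf [IsProbabilityMeasure μ] {lam : ℝ} (hlam : 0 < lam) {T : Ω → ℝ}
    (hT : Measurable T)
    (hTexp : ∀ z : ℝ, 0 ≤ z → μ {ω | T ω ≤ z} = ENNReal.ofReal (1 - exp (-lam * z))) :
    μ.map T = expMeasure lam := by
  have := isProbabilityMeasure_expMeasure hlam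
  have := Measure.isProbabilityMeasure_map (μ := μ) hT.aemeasurable
  refine Measure.eq_of_cdf _ _ (StieltjesFunction.ext fun z => ?_)
  rw [cdf_eq_real, map_measureReal_apply hT measurableSet_Iic, cdf_expMeasure_eq hlam]
  split_ifs with hz
  · rw [measureReal_def, preimage, ← neg_mul]
    simp only [mem_Iic, hTexp z hz]
    exact ENNReal.toReal_ofReal (sub_nonneg.2 (exp_le_one_iff.2 (by nlinarith)))
  · have hnull : μ (T ⁻¹' Iic z) = 0 := measure_mono_null
      (fun ω (hω : T ω ≤ z) => not_lt.2 (hω.trans (not_le.1 hz).le))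
      (ae_iff.1 (ae_pos_of_cdf hTexp))
    simp [measureReal_def, hnull]

lemma integral_exp_neg_mul_expMeasure {r lam : ℝ} (hlam : 0 < lam) (hr : 0 < r + lam) :
    ∫ x, exp (-r * x) ∂expMeasure lam = lam / (r + lam) := by
  have hpdf : gammaPDF 1 lam = exponentialPDF lam := rfl
  rw [expMeasure, gammaMeasure, hpdf, integral_withDensity_eq_integral_toReal_smul
    (f := exponentialPDF lam) (measurable_exponentialPDFReal lam).ennreal_ofReal
    (ae_of_all _ fun _ => ENNReal.ofReal_lt_top)]
  have hdens : ∀ x ∈ Ici (0 : ℝ),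
      (exponentialPDF lam x).toReal • exp (-r * x) = lam * exp (-(r + lam) * x) := by
    intro x hx
    rw [exponentialPDF_of_nonneg hx,
      ENNReal.toReal_ofReal (by positivity), smul_eq_mul, mul_assoc, ← exp_add]
    ring_nf
  rw [← setIntegral_eq_integral_of_forall_compl_eq_zero (s := Ici 0) fun x hx => ?_,
    setIntegral_congr_fun measurableSet_Ici hdens, integral_const_mul,
    integral_Ici_eq_integral_Ioi, integral_exp_mul_Ioi (by linarith) 0]
  · rw [mul_zero, exp_zero, neg_div_neg_eq, mul_one_div]
  · rw [exponentialPDF_of_neg (not_le.1 hx), ENNReal.toReal_zero, zero_smul]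

lemma integral_exp_neg_mul_of_cdf [IsProbabilityMeasure μ] {r lam : ℝ} (hlam : 0 < lam)
    (hr : 0 < r + lam) {T : Ω → ℝ} (hT : Measurable T)
    (hTexp : ∀ z : ℝ, 0 ≤ z → μ {ω | T ω ≤ z} = ENNReal.ofReal (1 - exp (-lam * z))) :
    ∫ ω, exp (-r * T ω) ∂μ = lam / (r + lam) := by
  rw [← integral_map (f := fun x => exp (-r * x)) hT.aemeasurable (by fun_prop),
    map_eq_expMeasure_of_cdf hlam hT hTexp, integral_exp_neg_mul_expMeasure hlam hr]

/-- The payoff of a player who is the leader exactly on `A`. -/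
noncomputable def stoppingPayoff (L F : Ω → ℝ) (A : Set Ω) (ω : Ω) : ℝ :=
  L ω * A.indicator 1 ω + F ω * Aᶜ.indicator 1 ω

lemma stoppingPayoff_add_le {L F : Ω → ℝ} {A₁ A₂ : Set Ω} {ω : Ω} (hFL : F ω ≤ L ω)
    (hω : ω ∉ A₁ ∩ A₂) :
    stoppingPayoff L F A₁ ω + stoppingPayoff L F A₂ ω ≤ L ω + F ω := by
  by_cases h₁ : ω ∈ A₁ <;> by_cases h₂ : ω ∈ A₂
  · exact absurd ⟨h₁, h₂⟩ hω
  all_goals simp [stoppingPayoff, h₁, h₂]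
  all_goals linarith

lemma MeasureTheory.Integrable.stoppingPayoff {L F : Ω → ℝ} {A : Set Ω} (hL : Integrable L μ)
    (hF : Integrable F μ) (hA : MeasurableSet A) : Integrable (stoppingPayoff L F A) μ := by
  have hbdd {s : Set Ω} : ∀ᵐ ω ∂μ, ‖s.indicator (1 : Ω → ℝ) ω‖ ≤ 1 :=
    ae_of_all _ fun ω => (norm_indicator_le_norm_self _ _).trans (by simp)
  exact (hL.mul_bdd (measurable_one.indicator hA).aestronglyMeasurable hbdd).add
    (hF.mul_bdd (measurable_one.indicator hA.compl).aestronglyMeasurable hbdd)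

lemma integral_stoppingPayoff_add_le {L F : Ω → ℝ} {A₁ A₂ : Set Ω} (hL : Integrable L μ)
    (hF : Integrable F μ) (hA₁ : MeasurableSet A₁) (hA₂ : MeasurableSet A₂)
    (hdisj : μ (A₁ ∩ A₂) = 0) (hFL : ∀ᵐ ω ∂μ, F ω ≤ L ω) :
    ∫ ω, stoppingPayoff L F A₁ ω ∂μ + ∫ ω, stoppingPayoff L F A₂ ω ∂μ
      ≤ ∫ ω, (L ω + F ω) ∂μ := by
  have h₁ := hL.stoppingPayoff hF hA₁
  have h₂ := hL.stoppingPayoff hF hA₂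
  rw [← integral_add h₁ h₂]
  refine integral_mono_ae (h₁.add h₂) (hL.add hF) ?_
  filter_upwards [hFL, measure_eq_zero_iff_ae_notMem.1 hdisj] with ω hω hω'
  exact stoppingPayoff_add_le hω hω'

end

theorem preemption_payoff_sum_estimate_general
    {Ω : Type*} {m : MeasurableSpace Ω} (μ : MeasureTheory.Measure Ω)
    [MeasureTheory.IsProbabilityMeasure μ]
    (r lam : ℝ) (hr : 0 < r) (hlam : 0 < lam)
    (a b c : ℝ) (ha : a = 2 + r / lam) (hb : b = r / (r + lam))
    (hc : c ∈ Set.Ico (1 : ℝ) (1 + b))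
    (T : Ω → ℝ) (hT : Measurable T)
    (hTexp : ∀ z : ℝ, 0 ≤ z → μ {ω | T ω ≤ z} = ENNReal.ofReal (1 - Real.exp (-lam * z)))
    (A₁ A₂ : Set Ω) (hA₁ : MeasurableSet A₁) (hA₂ : MeasurableSet A₂)
    (hdisj : μ (A₁ ∩ A₂) = 0) :
    (∫ ω, ((a - Real.exp (-r * T ω) * b) * Set.indicator A₁ 1 ω
        + Real.exp (-r * T ω) * c * Set.indicator A₁ᶜ 1 ω) ∂μ)
      + (∫ ω, ((a - Real.exp (-r * T ω) * b) * Set.indicator A₂ 1 ω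
        + Real.exp (-r * T ω) * c * Set.indicator A₂ᶜ 1 ω) ∂μ)
      ≤ a - (b - c) * lam / (r + lam) ∧
    a - (b - c) * lam / (r + lam) < a - b + 1 := by
  obtain ⟨hc1, hc2⟩ := hc
  have hrl : 0 < r + lam := by linarith
  have hEX := integral_exp_neg_mul_of_cdf (r := r) hlam hrl hT hTexp
  have hX : Integrable (fun ω => exp (-r * T ω)) μ :=
    .of_integral_ne_zero (by rw [hEX]; positivity)
  have hq : 1 - b = lam / (r + lam) := by rw [hb]; field_simp; ring
  have hq_pos : 0 < lam / (r + lam) := by positivity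
  have hbc : b + c ≤ a := by
    have : b ≤ r / lam := by rw [hb]; gcongr; linarith
    linarith
  have hFL : ∀ᵐ ω ∂μ, exp (-r * T ω) * c ≤ a - exp (-r * T ω) * b := by
    filter_upwards [ae_pos_of_cdf hTexp] with ω hω
    have : exp (-r * T ω) ≤ 1 := exp_le_one_iff.2 (by nlinarith)
    nlinarith
  refine ⟨(integral_stoppingPayoff_add_le (L := fun ω => a - exp (-r * T ω) * b)
    (F := fun ω => exp (-r * T ω) * c) ((integrable_const a).sub (hX.mul_const b))
    (hX.mul_const c) hA₁ hA₂ hdisj hFL).trans_eq ?_, ?_⟩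
  · have hLF : (fun ω => a - exp (-r * T ω) * b + exp (-r * T ω) * c)
        = fun ω => a + (c - b) * exp (-r * T ω) := by
      ext; ring
    rw [hLF, integral_add (integrable_const a) (hX.const_mul _), integral_const, probReal_univ,
      one_smul, integral_const_mul, hEX]
    ring
  · have := mul_lt_of_lt_one_left hq_pos (show c - b < 1 by linarith)
    rw [mul_div_assoc]
    linarith

/-- The payoff-sum estimate ruling out preemption at `T` in the jump example:
for events `A₁, A₂` with `P[A₁ ∩ A₂] = 0` and `A₂ ⊆ A₁ᶜ` up to null sets,
`E[L¹_T 1_{A₁} + F_T 1_{A₁ᶜ}] + E[L²_T 1_{A₂} + F_T 1_{A₂ᶜ}]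
  ≤ a - (b-c)λ/(r+λ) < a - b + 1 = L¹_0 + L²_0`. -/
theorem preemption_payoff_sum_estimate
    {Ω : Type*} {m : MeasurableSpace Ω} (μ : MeasureTheory.Measure Ω)
    [MeasureTheory.IsProbabilityMeasure μ]
    (r lam : ℝ) (hr : 0 < r) (hlam : 0 < lam)
    (a b c : ℝ) (ha : a = 2 + r / lam) (hb : b = r / (r + lam))
    (hc : c ∈ Set.Ico (1 : ℝ) (1 + b))
    (T : Ω → ℝ) (hT : Measurable T)
    (hTexp : ∀ z : ℝ, 0 ≤ z → μ {ω | T ω ≤ z} = ENNReal.ofReal (1 - Real.exp (-lam * z)))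
    (A₁ A₂ : Set Ω) (hA₁ : MeasurableSet A₁) (hA₂ : MeasurableSet A₂)
    (hdisj : μ (A₁ ∩ A₂) = 0) (hsub : μ (A₂ \ A₁ᶜ) = 0) :
    (∫ ω, ((a - Real.exp (-r * T ω) * b) * Set.indicator A₁ 1 ω
        + Real.exp (-r * T ω) * c * Set.indicator A₁ᶜ 1 ω) ∂μ)
      + (∫ ω, ((a - Real.exp (-r * T ω) * b) * Set.indicator A₂ 1 ω
        + Real.exp (-r * T ω) * c * Set.indicator A₂ᶜ 1 ω) ∂μ)
      ≤ a - (b - c) * lam / (r + lam) ∧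
    a - (b - c) * lam / (r + lam) < a - b + 1 :=
  preemption_payoff_sum_estimate_general (m := m) μ r lam hr hlam a b c ha hb hc T hT hTexp A₁ A₂
    hA₁ hA₂ hdisj
end
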